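/- arXiv:0805.3432 — 2 statements merged into one kernel-verified Lean document; each statement's English description precedes it below -/
import Mathlib

section
/- Let H be a bialgebra and (H, D) an L-R-admissible pair. Then for all h ∈ H and c, d ∈ D: [c(h₁·d)]₁ ⊗ [c(h₁·d)]₂^{(-1)}h₂ ⊗ [c(h₁·d)]₂^{(0)} = c₁(c₂^{(-1)}h₁ · d₁^{<0>}) ⊗ c₂^{(0)(-1)}h₂d₂^{(-1)} ⊗ (c₂^{(0)(0)} · d₁^{<1>})(h₃ · d₂^{(0)}). -/
open TensorProduct
noncomputable section
namespace LRPaper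
variable (k : Type*) [CommRing k]

def tt (A B C E : Type*) [AddCommGroup A] [Module k A] [AddCommGroup B] [Module k B]
    [AddCommGroup C] [Module k C] [AddCommGroup E] [Module k E] :
    (A ⊗[k] B) ⊗[k] (C ⊗[k] E) →ₗ[k] (A ⊗[k] C) ⊗[k] (B ⊗[k] E) :=
  (TensorProduct.tensorTensorTensorComm k A B C E).toLinearMap

def asl (A B C : Type*) [AddCommGroup A] [Module k A] [AddCommGroup B] [Module k B]
    [AddCommGroup C] [Module k C] :
    (A ⊗[k] B) ⊗[k] C →ₗ[k] A ⊗[k] (B ⊗[k] C) :=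
  (TensorProduct.assoc k A B C).toLinearMap

def asr (A B C : Type*) [AddCommGroup A] [Module k A] [AddCommGroup B] [Module k B]
    [AddCommGroup C] [Module k C] :
    A ⊗[k] (B ⊗[k] C) →ₗ[k] (A ⊗[k] B) ⊗[k] C :=
  (TensorProduct.assoc k A B C).symm.toLinearMap

def sw (A B : Type*) [AddCommGroup A] [Module k A] [AddCommGroup B] [Module k B] :
    A ⊗[k] B →ₗ[k] B ⊗[k] A :=
  (TensorProduct.comm k A B).toLinearMap


/-- `middle f` applies `f` to the two middle tensor factors. -/
def middle {A B C E B' C' : Type*} [AddCommGroup A] [Module k A] [AddCommGroup B] [Module k B]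
    [AddCommGroup C] [Module k C] [AddCommGroup E] [Module k E]
    [AddCommGroup B'] [Module k B'] [AddCommGroup C'] [Module k C']
    (f : B ⊗[k] C →ₗ[k] B' ⊗[k] C') :
    (A ⊗[k] B) ⊗[k] (C ⊗[k] E) →ₗ[k] (A ⊗[k] B') ⊗[k] (C' ⊗[k] E) :=
  asl k (A ⊗[k] B') C' E
    ∘ₗ TensorProduct.map
        (asr k A B' C' ∘ₗ TensorProduct.map LinearMap.id f ∘ₗ asl k A B C) LinearMap.id
    ∘ₗ asr k (A ⊗[k] B) C E

section Conditions
variable (H : Type*) [Ring H] [Bialgebra k H]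
variable {M N : Type*} [AddCommGroup M] [Module k M] [AddCommGroup N] [Module k N]

/-- counit of `H` -/
def εH : H →ₗ[k] k := Coalgebra.counit
/-- comultiplication of `H` -/
def δH : H →ₗ[k] H ⊗[k] H := Coalgebra.comul
/-- multiplication of `H` -/
def μH : H ⊗[k] H →ₗ[k] H := LinearMap.mul' k H

def IsLeftModule (aL : H ⊗[k] M →ₗ[k] M) : Prop :=
  (∀ m : M, aL (1 ⊗ₜ m) = m) ∧
  ∀ (h h' : H) (m : M), aL ((h * h') ⊗ₜ m) = aL (h ⊗ₜ aL (h' ⊗ₜ m))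

def IsRightModule (aR : M ⊗[k] H →ₗ[k] M) : Prop :=
  (∀ m : M, aR (m ⊗ₜ 1) = m) ∧
  ∀ (m : M) (h h' : H), aR (m ⊗ₜ (h * h')) = aR (aR (m ⊗ₜ h) ⊗ₜ h')

def IsBimodule (aL : H ⊗[k] M →ₗ[k] M) (aR : M ⊗[k] H →ₗ[k] M) : Prop :=
  IsLeftModule k H aL ∧ IsRightModule k H aR ∧
  ∀ (h : H) (m : M) (h' : H), aR (aL (h ⊗ₜ m) ⊗ₜ h') = aL (h ⊗ₜ aR (m ⊗ₜ h'))

def IsLeftComodule (cL : M →ₗ[k] H ⊗[k] M) : Prop :=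
  (∀ m : M, TensorProduct.lid k M (TensorProduct.map (εH k H) LinearMap.id (cL m)) = m) ∧
  ∀ m : M, TensorProduct.map LinearMap.id cL (cL m)
    = TensorProduct.assoc k H H M (TensorProduct.map (δH k H) LinearMap.id (cL m))

def IsRightComodule (cR : M →ₗ[k] M ⊗[k] H) : Prop :=
  (∀ m : M, TensorProduct.rid k M (TensorProduct.map LinearMap.id (εH k H) (cR m)) = m) ∧
  ∀ m : M, TensorProduct.map cR LinearMap.id (cR m)
    = (TensorProduct.assoc k M H H).symm (TensorProduct.map LinearMap.id (δH k H) (cR m))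

def IsBicomodule (cL : M →ₗ[k] H ⊗[k] M) (cR : M →ₗ[k] M ⊗[k] H) : Prop :=
  IsLeftComodule k H cL ∧ IsRightComodule k H cR ∧
  ∀ m : M, TensorProduct.map LinearMap.id cR (cL m)
    = TensorProduct.assoc k H M H (TensorProduct.map cL LinearMap.id (cR m))

/-- `(h₁⊗h₂)⊗m ↦ (h₁·m)⁽⁻¹⁾h₂ ⊗ (h₁·m)⁽⁰⁾` -/
def ydlL (aL : H ⊗[k] M →ₗ[k] M) (cL : M →ₗ[k] H ⊗[k] M) :
    (H ⊗[k] H) ⊗[k] M →ₗ[k] H ⊗[k] M :=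
  TensorProduct.map (μH k H ∘ₗ sw k H H) LinearMap.id
    ∘ₗ asr k H H M
    ∘ₗ TensorProduct.map LinearMap.id (cL ∘ₗ aL)
    ∘ₗ asl k H H M
    ∘ₗ TensorProduct.map (sw k H H) LinearMap.id

/-- `(h₁⊗h₂)⊗m ↦ h₁m⁽⁻¹⁾ ⊗ h₂·m⁽⁰⁾` -/
def ydlR (aL : H ⊗[k] M →ₗ[k] M) (cL : M →ₗ[k] H ⊗[k] M) :
    (H ⊗[k] H) ⊗[k] M →ₗ[k] H ⊗[k] M :=
  TensorProduct.map (μH k H) aL ∘ₗ tt k H H H M ∘ₗ TensorProduct.map LinearMap.id cL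

/-- left-left Yetter–Drinfeld compatibility -/
def CondYDl (aL : H ⊗[k] M →ₗ[k] M) (cL : M →ₗ[k] H ⊗[k] M) : Prop :=
  ∀ (h : H) (m : M),
    ydlL k H aL cL (δH k H h ⊗ₜ m) = ydlR k H aL cL (δH k H h ⊗ₜ m)

/-- left-right Long compatibility -/
def CondLongLR (aL : H ⊗[k] M →ₗ[k] M) (cR : M →ₗ[k] M ⊗[k] H) : Prop :=
  ∀ (h : H) (m : M),
    cR (aL (h ⊗ₜ m))
      = TensorProduct.map aL LinearMap.id ((TensorProduct.assoc k H M H).symm (h ⊗ₜ cR m))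

/-- `m⊗(h₁⊗h₂) ↦ (m·h₂)⁽⁰⁾ ⊗ h₁(m·h₂)⁽¹⁾` -/
def ydrL (aR : M ⊗[k] H →ₗ[k] M) (cR : M →ₗ[k] M ⊗[k] H) :
    M ⊗[k] (H ⊗[k] H) →ₗ[k] M ⊗[k] H :=
  TensorProduct.map LinearMap.id (μH k H ∘ₗ sw k H H)
    ∘ₗ asl k M H H
    ∘ₗ TensorProduct.map (cR ∘ₗ aR) LinearMap.id
    ∘ₗ asr k M H H
    ∘ₗ TensorProduct.map LinearMap.id (sw k H H)

/-- `m⊗(h₁⊗h₂) ↦ m⁽⁰⁾·h₁ ⊗ m⁽¹⁾h₂` -/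
def ydrR (aR : M ⊗[k] H →ₗ[k] M) (cR : M →ₗ[k] M ⊗[k] H) :
    M ⊗[k] (H ⊗[k] H) →ₗ[k] M ⊗[k] H :=
  TensorProduct.map aR (μH k H) ∘ₗ tt k M H H H ∘ₗ TensorProduct.map cR LinearMap.id

/-- right-right Yetter–Drinfeld compatibility -/
def CondYDr (aR : M ⊗[k] H →ₗ[k] M) (cR : M →ₗ[k] M ⊗[k] H) : Prop :=
  ∀ (h : H) (m : M),
    ydrL k H aR cR (m ⊗ₜ δH k H h) = ydrR k H aR cR (m ⊗ₜ δH k H h)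

/-- right-left Long compatibility -/
def CondLongRL (aR : M ⊗[k] H →ₗ[k] M) (cL : M →ₗ[k] H ⊗[k] M) : Prop :=
  ∀ (m : M) (h : H),
    cL (aR (m ⊗ₜ h))
      = TensorProduct.map LinearMap.id aR (TensorProduct.assoc k H M H (cL m ⊗ₜ h))

/-- objects of the category LR(H) -/
def IsLRObj (aL : H ⊗[k] M →ₗ[k] M) (aR : M ⊗[k] H →ₗ[k] M)
    (cL : M →ₗ[k] H ⊗[k] M) (cR : M →ₗ[k] M ⊗[k] H) : Prop :=
  IsBimodule k H aL aR ∧ IsBicomodule k H cL cR ∧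
  CondYDl k H aL cL ∧ CondLongLR k H aL cR ∧ CondYDr k H aR cR ∧ CondLongRL k H aR cL


variable {P : Type*} [AddCommGroup P] [Module k P]

/-- diagonal left action on `M ⊗ N` -/
def tActL (aLM : H ⊗[k] M →ₗ[k] M) (aLN : H ⊗[k] N →ₗ[k] N) :
    H ⊗[k] (M ⊗[k] N) →ₗ[k] M ⊗[k] N :=
  TensorProduct.map aLM aLN ∘ₗ tt k H H M N ∘ₗ TensorProduct.map (δH k H) LinearMap.id

/-- diagonal right action on `M ⊗ N` -/
def tActR (aRM : M ⊗[k] H →ₗ[k] M) (aRN : N ⊗[k] H →ₗ[k] N) :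
    (M ⊗[k] N) ⊗[k] H →ₗ[k] M ⊗[k] N :=
  TensorProduct.map aRM aRN ∘ₗ tt k M N H H ∘ₗ TensorProduct.map LinearMap.id (δH k H)

/-- codiagonal left coaction on `M ⊗ N` -/
def tCoactL (cLM : M →ₗ[k] H ⊗[k] M) (cLN : N →ₗ[k] H ⊗[k] N) :
    M ⊗[k] N →ₗ[k] H ⊗[k] (M ⊗[k] N) :=
  TensorProduct.map (μH k H) LinearMap.id ∘ₗ tt k H M H N ∘ₗ TensorProduct.map cLM cLN

/-- codiagonal right coaction on `M ⊗ N` -/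
def tCoactR (cRM : M →ₗ[k] M ⊗[k] H) (cRN : N →ₗ[k] N ⊗[k] H) :
    M ⊗[k] N →ₗ[k] (M ⊗[k] N) ⊗[k] H :=
  TensorProduct.map LinearMap.id (μH k H) ∘ₗ tt k M H N H ∘ₗ TensorProduct.map cRM cRN

/-- the (pre)braiding `m ⊗ n ↦ m⁽⁻¹⁾·n⁽⁰⁾ ⊗ m⁽⁰⁾·n⁽¹⁾` of LR(H) -/
def braid (cLM : M →ₗ[k] H ⊗[k] M) (aRM : M ⊗[k] H →ₗ[k] M)
    (aLN : H ⊗[k] N →ₗ[k] N) (cRN : N →ₗ[k] N ⊗[k] H) :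
    M ⊗[k] N →ₗ[k] N ⊗[k] M :=
  TensorProduct.map aLN aRM ∘ₗ tt k H M N H ∘ₗ TensorProduct.map cLM cRN

/-- coalgebra axioms for explicit comultiplication and counit -/
def IsCoalg (Δd : M →ₗ[k] M ⊗[k] M) (εd : M →ₗ[k] k) : Prop :=
  (∀ m : M, TensorProduct.lid k M (TensorProduct.map εd LinearMap.id (Δd m)) = m) ∧
  (∀ m : M, TensorProduct.rid k M (TensorProduct.map LinearMap.id εd (Δd m)) = m) ∧
  ∀ m : M, TensorProduct.assoc k M M M (TensorProduct.map Δd LinearMap.id (Δd m))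
    = TensorProduct.map LinearMap.id Δd (Δd m)

/-- `M` is a left `H`-comodule coalgebra -/
def IsLComodCoalg (cL : M →ₗ[k] H ⊗[k] M) (Δd : M →ₗ[k] M ⊗[k] M) (εd : M →ₗ[k] k) : Prop :=
  (∀ m : M,
    TensorProduct.map (μH k H) LinearMap.id (tt k H M H M (TensorProduct.map cL cL (Δd m)))
      = TensorProduct.map LinearMap.id Δd (cL m)) ∧
  ∀ m : M, TensorProduct.rid k H (TensorProduct.map LinearMap.id εd (cL m)) = εd m • (1 : H)

/-- `M` is a right `H`-comodule coalgebra -/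
def IsRComodCoalg (cR : M →ₗ[k] M ⊗[k] H) (Δd : M →ₗ[k] M ⊗[k] M) (εd : M →ₗ[k] k) : Prop :=
  (∀ m : M,
    TensorProduct.map LinearMap.id (μH k H) (tt k M H M H (TensorProduct.map cR cR (Δd m)))
      = TensorProduct.map Δd LinearMap.id (cR m)) ∧
  ∀ m : M, TensorProduct.lid k H (TensorProduct.map εd LinearMap.id (cR m)) = εd m • (1 : H)

/-- morphisms of LR(H) -/
def IsLRHom {M' : Type*} [AddCommGroup M'] [Module k M']
    (aLM : H ⊗[k] M →ₗ[k] M) (aRM : M ⊗[k] H →ₗ[k] M)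
    (cLM : M →ₗ[k] H ⊗[k] M) (cRM : M →ₗ[k] M ⊗[k] H)
    (aLM' : H ⊗[k] M' →ₗ[k] M') (aRM' : M' ⊗[k] H →ₗ[k] M')
    (cLM' : M' →ₗ[k] H ⊗[k] M') (cRM' : M' →ₗ[k] M' ⊗[k] H)
    (f : M →ₗ[k] M') : Prop :=
  (∀ (h : H) (m : M), f (aLM (h ⊗ₜ m)) = aLM' (h ⊗ₜ f m)) ∧
  (∀ (m : M) (h : H), f (aRM (m ⊗ₜ h)) = aRM' (f m ⊗ₜ h)) ∧
  (∀ m : M, cLM' (f m) = TensorProduct.map LinearMap.id f (cLM m)) ∧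
  (∀ m : M, cRM' (f m) = TensorProduct.map f LinearMap.id (cRM m))


end Conditions

section AlgebraConditions
variable (H : Type*) [Ring H] [Bialgebra k H]
variable {D : Type*} [Ring D] [Algebra k D]

/-- multiplication of `D` -/
def μD : D ⊗[k] D →ₗ[k] D := LinearMap.mul' k D

/-- `D` is a left `H`-module algebra -/
def IsLeftModuleAlgebra (aL : H ⊗[k] D →ₗ[k] D) : Prop :=
  (∀ h : H, aL (h ⊗ₜ (1 : D)) = εH k H h • (1 : D)) ∧
  ∀ (h : H) (c d : D),
    aL (h ⊗ₜ (c * d))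
      = μD k (TensorProduct.map aL aL (tt k H H D D (δH k H h ⊗ₜ (c ⊗ₜ d))))

/-- `D` is a right `H`-module algebra -/
def IsRightModuleAlgebra (aR : D ⊗[k] H →ₗ[k] D) : Prop :=
  (∀ h : H, aR ((1 : D) ⊗ₜ h) = εH k H h • (1 : D)) ∧
  ∀ (c d : D) (h : H),
    aR ((c * d) ⊗ₜ h)
      = μD k (TensorProduct.map aR aR (tt k D D H H ((c ⊗ₜ d) ⊗ₜ δH k H h)))

/-- `ε_D` is an algebra map -/
def CondCounitAlg (εd : D →ₗ[k] k) : Prop :=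
  εd 1 = 1 ∧ ∀ c d : D, εd (c * d) = εd c * εd d

/-- `ε_D(h·d) = ε(h)ε_D(d)` and `ε_D(d·h) = ε_D(d)ε(h)` -/
def CondCounitActs (aL : H ⊗[k] D →ₗ[k] D) (aR : D ⊗[k] H →ₗ[k] D) (εd : D →ₗ[k] k) : Prop :=
  ∀ (h : H) (d : D), εd (aL (h ⊗ₜ d)) = εH k H h * εd d ∧ εd (aR (d ⊗ₜ h)) = εd d * εH k H h

/-- unitality of the coactions and of the comultiplication of `D` -/
def CondUnits (cL : D →ₗ[k] H ⊗[k] D) (cR : D →ₗ[k] D ⊗[k] H) (Δd : D →ₗ[k] D ⊗[k] D) : Prop :=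
  cL 1 = 1 ⊗ₜ 1 ∧ cR 1 = 1 ⊗ₜ 1 ∧ Δd 1 = 1 ⊗ₜ 1

/-- both coactions of `D` are multiplicative -/
def CondCoactMul (cL : D →ₗ[k] H ⊗[k] D) (cR : D →ₗ[k] D ⊗[k] H) : Prop :=
  (∀ c d : D, cL (c * d)
      = TensorProduct.map (μH k H) (μD k) (tt k H D H D (cL c ⊗ₜ cL d))) ∧
  ∀ c d : D, cR (c * d)
      = TensorProduct.map (μD k) (μH k H) (tt k D H D H (cR c ⊗ₜ cR d))

/-- `Δ_D` is an `H`-bimodule map -/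
def CondComulAct (aL : H ⊗[k] D →ₗ[k] D) (aR : D ⊗[k] H →ₗ[k] D)
    (Δd : D →ₗ[k] D ⊗[k] D) : Prop :=
  (∀ (h : H) (d : D), Δd (aL (h ⊗ₜ d))
      = TensorProduct.map aL aL (tt k H H D D (δH k H h ⊗ₜ Δd d))) ∧
  ∀ (d : D) (h : H), Δd (aR (d ⊗ₜ h))
      = TensorProduct.map aR aR (tt k D D H H (Δd d ⊗ₜ δH k H h))

/-- `Δ_D(cd) = c₁(c₂⁽⁻¹⁾·d₁⁽⁰⁾) ⊗ (c₂⁽⁰⁾·d₁⁽¹⁾)d₂` -/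
def CondBraidMul (aL : H ⊗[k] D →ₗ[k] D) (aR : D ⊗[k] H →ₗ[k] D)
    (cL : D →ₗ[k] H ⊗[k] D) (cR : D →ₗ[k] D ⊗[k] H) (Δd : D →ₗ[k] D ⊗[k] D) : Prop :=
  ∀ c d : D, Δd (c * d)
    = TensorProduct.map (μD k) (μD k)
        (middle k (braid k H cL aR aL cR) (Δd c ⊗ₜ Δd d))

/-- `c⁽⁰⁾·d⁽⁻¹⁾ ⊗ c⁽¹⁾·d⁽⁰⁾ = c ⊗ d` -/
def Cond114 (aL : H ⊗[k] D →ₗ[k] D) (aR : D ⊗[k] H →ₗ[k] D)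
    (cL : D →ₗ[k] H ⊗[k] D) (cR : D →ₗ[k] D ⊗[k] H) : Prop :=
  ∀ c d : D, TensorProduct.map aR aL (tt k D H H D (cR c ⊗ₜ cL d)) = c ⊗ₜ d

/-- `(H, D)` is an L-R-admissible pair -/
def LRAdmissible (aL : H ⊗[k] D →ₗ[k] D) (aR : D ⊗[k] H →ₗ[k] D)
    (cL : D →ₗ[k] H ⊗[k] D) (cR : D →ₗ[k] D ⊗[k] H)
    (Δd : D →ₗ[k] D ⊗[k] D) (εd : D →ₗ[k] k) : Prop :=
  IsBimodule k H aL aR ∧ IsLeftModuleAlgebra k H aL ∧ IsRightModuleAlgebra k H aR ∧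
  IsBicomodule k H cL cR ∧ IsCoalg k Δd εd ∧
  IsLComodCoalg k H cL Δd εd ∧ IsRComodCoalg k H cR Δd εd ∧
  CondCounitAlg k εd ∧ CondCounitActs k H aL aR εd ∧ CondUnits k H cL cR Δd ∧
  CondCoactMul k H cL cR ∧ CondComulAct k H aL aR Δd ∧ CondBraidMul k H aL aR cL cR Δd ∧
  CondYDl k H aL cL ∧ CondLongLR k H aL cR ∧ CondYDr k H aR cR ∧ CondLongRL k H aR cL ∧
  Cond114 k H aL aR cL cR

/-- `Σ (d·h'₂) ⊗ h'₁` -/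
def Xel (aR : D ⊗[k] H →ₗ[k] D) (d : D) (h' : H) : D ⊗[k] H :=
  TensorProduct.map aR LinearMap.id
    ((TensorProduct.assoc k D H H).symm (d ⊗ₜ TensorProduct.comm k H H (δH k H h')))

/-- `Σ (h₁·d') ⊗ h₂` -/
def Yel (aL : H ⊗[k] D →ₗ[k] D) (h : H) (d' : D) : D ⊗[k] H :=
  TensorProduct.comm k H D
    (TensorProduct.map LinearMap.id aL
      (TensorProduct.assoc k H H D
        (TensorProduct.map (sw k H H) LinearMap.id (δH k H h ⊗ₜ d'))))

/-- the element `(d·h'₂)(h₁·d') ⊗ h₂h'₁` of the L-R-smash product -/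
def smashMulExpr (aL : H ⊗[k] D →ₗ[k] D) (aR : D ⊗[k] H →ₗ[k] D)
    (d : D) (h : H) (d' : D) (h' : H) : D ⊗[k] H :=
  TensorProduct.map (μD k) (μH k H ∘ₗ sw k H H)
    (tt k D H D H (Xel k H aR d h' ⊗ₜ Yel k H aL h d'))

end AlgebraConditions

section CoproductGeneric
variable (H : Type*) [Ring H] [Bialgebra k H]
variable {D : Type*} [AddCommGroup D] [Module k D]

/-- structure map of the L-R-smash coproduct:
`(d₁⊗d₂)⊗(h₁⊗h₂) ↦ (d₁⁽⁰⁾ ⊗ d₂⁽⁻¹⁾h₁) ⊗ (d₂⁽⁰⁾ ⊗ h₂d₁⁽¹⁾)` -/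
def Wmap (cL : D →ₗ[k] H ⊗[k] D) (cR : D →ₗ[k] D ⊗[k] H) :
    (D ⊗[k] D) ⊗[k] (H ⊗[k] H) →ₗ[k] (D ⊗[k] H) ⊗[k] (D ⊗[k] H) :=
  TensorProduct.map
      (TensorProduct.map LinearMap.id (μH k H) ∘ₗ asl k D H H)
      (TensorProduct.map LinearMap.id (μH k H ∘ₗ sw k H H) ∘ₗ asl k D H H
        ∘ₗ TensorProduct.map (sw k H D) LinearMap.id)
    ∘ₗ tt k (D ⊗[k] H) (H ⊗[k] D) H H
    ∘ₗ TensorProduct.map (tt k D H H D) LinearMap.id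
    ∘ₗ TensorProduct.map (TensorProduct.map cR cL) LinearMap.id

/-- counit of the L-R-smash coproduct -/
def smashCounit (εd : D →ₗ[k] k) : D ⊗[k] H →ₗ[k] k :=
  LinearMap.mul' k k ∘ₗ TensorProduct.map εd (εH k H)



end CoproductGeneric

/-- the trivial right action `d·h = ε(h)d` -/
def trivActR {D : Type*} [AddCommGroup D] [Module k D] (H : Type*) [Ring H] [Bialgebra k H] :
    D ⊗[k] H →ₗ[k] D :=
  (TensorProduct.rid k D).toLinearMap ∘ₗ TensorProduct.map LinearMap.id (εH k H)

/-- the trivial right coaction `d ↦ d ⊗ 1` -/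
def trivCoactR {D : Type*} [AddCommGroup D] [Module k D] (H : Type*) [Ring H] [Bialgebra k H] :
    D →ₗ[k] D ⊗[k] H :=
  TensorProduct.map LinearMap.id (Algebra.linearMap k H) ∘ₗ (TensorProduct.rid k D).symm.toLinearMap

/-- the trivial left action `h·d = ε(h)d` -/
def trivActL {D : Type*} [AddCommGroup D] [Module k D] (H : Type*) [Ring H] [Bialgebra k H] :
    H ⊗[k] D →ₗ[k] D :=
  (TensorProduct.lid k D).toLinearMap ∘ₗ TensorProduct.map (εH k H) LinearMap.id

/-- the trivial left coaction `d ↦ 1 ⊗ d` -/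
def trivCoactL {D : Type*} [AddCommGroup D] [Module k D] (H : Type*) [Ring H] [Bialgebra k H] :
    D →ₗ[k] H ⊗[k] D :=
  TensorProduct.map (Algebra.linearMap k H) LinearMap.id ∘ₗ (TensorProduct.lid k D).symm.toLinearMap

section DoubleBiproduct
variable (H : Type*) [Ring H] [Bialgebra k H]
variable (A B : Type*) [Ring A] [Algebra k A] [Ring B] [Algebra k B]

/-- braiding of the left-left Yetter-Drinfeld category: `x ⊗ y ↦ x⁽⁻¹⁾·y ⊗ x⁽⁰⁾` -/
def braidYDl (cA : A →ₗ[k] H ⊗[k] A) (aA : H ⊗[k] A →ₗ[k] A) :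
    A ⊗[k] A →ₗ[k] A ⊗[k] A :=
  sw k A A ∘ₗ TensorProduct.map LinearMap.id aA ∘ₗ asl k A H A
    ∘ₗ TensorProduct.map (sw k H A) LinearMap.id ∘ₗ TensorProduct.map cA LinearMap.id

/-- braiding of the right-right Yetter-Drinfeld category: `x ⊗ y ↦ y⁽⁰⁾ ⊗ x·y⁽¹⁾` -/
def braidYDr (cB : B →ₗ[k] B ⊗[k] H) (aB : B ⊗[k] H →ₗ[k] B) :
    B ⊗[k] B →ₗ[k] B ⊗[k] B :=
  TensorProduct.map LinearMap.id aB ∘ₗ asl k B B H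
    ∘ₗ TensorProduct.map (sw k B B) LinearMap.id ∘ₗ asr k B B H
    ∘ₗ TensorProduct.map LinearMap.id cB

/-- `A` is a bialgebra in the left-left Yetter-Drinfeld category over `H` -/
def YDlBialgebra (aA : H ⊗[k] A →ₗ[k] A) (cA : A →ₗ[k] H ⊗[k] A)
    (ΔA : A →ₗ[k] A ⊗[k] A) (εA : A →ₗ[k] k) : Prop :=
  IsLeftModule k H aA ∧ IsLeftComodule k H cA ∧ CondYDl k H aA cA ∧
  IsLeftModuleAlgebra k H aA ∧
  (∀ a a' : A, cA (a * a')
      = TensorProduct.map (μH k H) (μD k) (tt k H A H A (cA a ⊗ₜ cA a'))) ∧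
  cA 1 = 1 ⊗ₜ 1 ∧ IsCoalg k ΔA εA ∧ CondCounitAlg k εA ∧
  (∀ (h : H) (a : A), εA (aA (h ⊗ₜ a)) = εH k H h * εA a) ∧ ΔA 1 = 1 ⊗ₜ 1 ∧
  (∀ (h : H) (a : A), ΔA (aA (h ⊗ₜ a))
      = TensorProduct.map aA aA (tt k H H A A (δH k H h ⊗ₜ ΔA a))) ∧
  IsLComodCoalg k H cA ΔA εA ∧
  ∀ a a' : A, ΔA (a * a')
      = TensorProduct.map (μD k) (μD k)
          (middle k (braidYDl k H A cA aA) (ΔA a ⊗ₜ ΔA a'))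

/-- `B` is a bialgebra in the right-right Yetter-Drinfeld category over `H` -/
def YDrBialgebra (aB : B ⊗[k] H →ₗ[k] B) (cB : B →ₗ[k] B ⊗[k] H)
    (ΔB : B →ₗ[k] B ⊗[k] B) (εB : B →ₗ[k] k) : Prop :=
  IsRightModule k H aB ∧ IsRightComodule k H cB ∧ CondYDr k H aB cB ∧
  IsRightModuleAlgebra k H aB ∧
  (∀ b b' : B, cB (b * b')
      = TensorProduct.map (μD k) (μH k H) (tt k B H B H (cB b ⊗ₜ cB b'))) ∧
  cB 1 = 1 ⊗ₜ 1 ∧ IsCoalg k ΔB εB ∧ CondCounitAlg k εB ∧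
  (∀ (b : B) (h : H), εB (aB (b ⊗ₜ h)) = εB b * εH k H h) ∧ ΔB 1 = 1 ⊗ₜ 1 ∧
  (∀ (b : B) (h : H), ΔB (aB (b ⊗ₜ h))
      = TensorProduct.map aB aB (tt k B B H H (ΔB b ⊗ₜ δH k H h))) ∧
  IsRComodCoalg k H cB ΔB εB ∧
  ∀ b b' : B, ΔB (b * b')
      = TensorProduct.map (μD k) (μD k)
          (middle k (braidYDr k H B cB aB) (ΔB b ⊗ₜ ΔB b'))

/-- the trivial-pairing condition `b² ▷ a² ⊗ b¹ ◁ a¹ = a ⊗ b` -/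
def PairingTrivial (aA : H ⊗[k] A →ₗ[k] A) (cA : A →ₗ[k] H ⊗[k] A)
    (aB : B ⊗[k] H →ₗ[k] B) (cB : B →ₗ[k] B ⊗[k] H) : Prop :=
  ∀ (a : A) (b : B),
    sw k B A (TensorProduct.map aB aA (tt k B H H A (cB b ⊗ₜ cA a))) = a ⊗ₜ b

/-- `Σ a(h₁ ▷ a') ⊗ h₂` -/
def P1 (aA : H ⊗[k] A →ₗ[k] A) (a : A) (h : H) (a' : A) : A ⊗[k] H :=
  TensorProduct.map (μD k) LinearMap.id
    ((TensorProduct.assoc k A A H).symm (a ⊗ₜ Yel k H aA h a'))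

/-- `Σ h'₁ ⊗ (b ◁ h'₂)b'` -/
def P2 (aB : B ⊗[k] H →ₗ[k] B) (b : B) (h' : H) (b' : B) : H ⊗[k] B :=
  TensorProduct.map LinearMap.id (μD k)
    (TensorProduct.assoc k H B B
      ((sw k B H
          (TensorProduct.map aB LinearMap.id
            ((TensorProduct.assoc k B H H).symm
              (TensorProduct.map LinearMap.id (sw k H H) (b ⊗ₜ δH k H h'))))) ⊗ₜ b'))

/-- `(x⊗u)⊗(v⊗y) ↦ (x ⊗ uv) ⊗ y` -/
def combineAHB : (A ⊗[k] H) ⊗[k] (H ⊗[k] B) →ₗ[k] (A ⊗[k] H) ⊗[k] B :=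
  TensorProduct.map (TensorProduct.map LinearMap.id (μH k H)) LinearMap.id
    ∘ₗ TensorProduct.map (asl k A H H) LinearMap.id
    ∘ₗ (TensorProduct.assoc k (A ⊗[k] H) H B).symm.toLinearMap

/-- the element `a(h₁▷a') # h₂h'₁ # (b◁h'₂)b'` of the double biproduct -/
def dblMulExpr (aA : H ⊗[k] A →ₗ[k] A) (aB : B ⊗[k] H →ₗ[k] B)
    (a : A) (h : H) (b : B) (a' : A) (h' : H) (b' : B) : (A ⊗[k] H) ⊗[k] B :=
  combineAHB k H A B (P1 k H A aA a h a' ⊗ₜ P2 k H B aB b h' b')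

/-- comultiplication map of the double biproduct:
`((a₁⊗a₂)⊗(h₁⊗h₂))⊗(b₁⊗b₂) ↦ (a₁ # a₂¹h₁ # b₁¹) ⊗ (a₂² # h₂b₁² # b₂)` -/
def Wd (cA : A →ₗ[k] H ⊗[k] A) (cB : B →ₗ[k] B ⊗[k] H) :
    ((A ⊗[k] A) ⊗[k] (H ⊗[k] H)) ⊗[k] (B ⊗[k] B) →ₗ[k]
      ((A ⊗[k] H) ⊗[k] B) ⊗[k] ((A ⊗[k] H) ⊗[k] B) :=
  TensorProduct.map LinearMap.id
      (TensorProduct.map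
          (TensorProduct.map LinearMap.id (μH k H) ∘ₗ asl k A H H ∘ₗ sw k H (A ⊗[k] H))
          LinearMap.id
        ∘ₗ (TensorProduct.assoc k H (A ⊗[k] H) B).symm.toLinearMap)
    ∘ₗ (TensorProduct.assoc k ((A ⊗[k] H) ⊗[k] B) H ((A ⊗[k] H) ⊗[k] B)).toLinearMap
    ∘ₗ TensorProduct.map (TensorProduct.assoc k (A ⊗[k] H) B H).symm.toLinearMap LinearMap.id
    ∘ₗ tt k (A ⊗[k] H) (A ⊗[k] H) (B ⊗[k] H) B
    ∘ₗ TensorProduct.map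
        (TensorProduct.map (TensorProduct.map LinearMap.id (μH k H) ∘ₗ asl k A H H) LinearMap.id)
        LinearMap.id
    ∘ₗ TensorProduct.map (tt k (A ⊗[k] H) A H H) LinearMap.id
    ∘ₗ TensorProduct.map
        (TensorProduct.map
          ((TensorProduct.assoc k A H A).symm.toLinearMap ∘ₗ TensorProduct.map LinearMap.id cA)
          LinearMap.id)
        (TensorProduct.map cB LinearMap.id)

/-- counit of the double biproduct -/
def dblCounit (εA : A →ₗ[k] k) (εB : B →ₗ[k] k) : (A ⊗[k] H) ⊗[k] B →ₗ[k] k :=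
  LinearMap.mul' k k
    ∘ₗ TensorProduct.map (LinearMap.mul' k k ∘ₗ TensorProduct.map εA (εH k H)) εB

/-- induced left action on `D = A ⊗ B` -/
def dActL (aA : H ⊗[k] A →ₗ[k] A) : H ⊗[k] (A ⊗[k] B) →ₗ[k] A ⊗[k] B :=
  TensorProduct.map aA LinearMap.id ∘ₗ asr k H A B

/-- induced right action on `D = A ⊗ B` -/
def dActR (aB : B ⊗[k] H →ₗ[k] B) : (A ⊗[k] B) ⊗[k] H →ₗ[k] A ⊗[k] B :=
  TensorProduct.map LinearMap.id aB ∘ₗ asl k A B H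

/-- induced left coaction on `D = A ⊗ B` -/
def dCoactL (cA : A →ₗ[k] H ⊗[k] A) : A ⊗[k] B →ₗ[k] H ⊗[k] (A ⊗[k] B) :=
  asl k H A B ∘ₗ TensorProduct.map cA LinearMap.id

/-- induced right coaction on `D = A ⊗ B` -/
def dCoactR (cB : B →ₗ[k] B ⊗[k] H) : A ⊗[k] B →ₗ[k] (A ⊗[k] B) ⊗[k] H :=
  asr k A B H ∘ₗ TensorProduct.map LinearMap.id cB

/-- tensor product comultiplication on `D = A ⊗ B` -/
def dComul (ΔA : A →ₗ[k] A ⊗[k] A) (ΔB : B →ₗ[k] B ⊗[k] B) :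
    A ⊗[k] B →ₗ[k] (A ⊗[k] B) ⊗[k] (A ⊗[k] B) :=
  tt k A A B B ∘ₗ TensorProduct.map ΔA ΔB

/-- tensor product counit on `D = A ⊗ B` -/
def dCounit (εA : A →ₗ[k] k) (εB : B →ₗ[k] k) : A ⊗[k] B →ₗ[k] k :=
  LinearMap.mul' k k ∘ₗ TensorProduct.map εA εB

/-- `(a ⊗ b) ⊗ h ↦ (a ⊗ h) ⊗ b` -/
def phiAB : (A ⊗[k] B) ⊗[k] H →ₗ[k] (A ⊗[k] H) ⊗[k] B :=
  asr k A H B ∘ₗ TensorProduct.map LinearMap.id (sw k B H) ∘ₗ asl k A B H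

end DoubleBiproduct

section Pointwise
variable (H : Type*) [Ring H] [Bialgebra k H]
variable (M N : Type*) [AddCommGroup M] [Module k M] [AddCommGroup N] [Module k N]

/-- left action on `M ⊗ N` through the first factor -/
def pActL (aLM : H ⊗[k] M →ₗ[k] M) : H ⊗[k] (M ⊗[k] N) →ₗ[k] M ⊗[k] N :=
  TensorProduct.map aLM LinearMap.id ∘ₗ asr k H M N

/-- right action on `M ⊗ N` through the second factor -/
def pActR (aRN : N ⊗[k] H →ₗ[k] N) : (M ⊗[k] N) ⊗[k] H →ₗ[k] M ⊗[k] N :=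
  TensorProduct.map LinearMap.id aRN ∘ₗ asl k M N H

/-- left coaction on `M ⊗ N` through the first factor -/
def pCoactL (cLM : M →ₗ[k] H ⊗[k] M) : M ⊗[k] N →ₗ[k] H ⊗[k] (M ⊗[k] N) :=
  asl k H M N ∘ₗ TensorProduct.map cLM LinearMap.id

/-- right coaction on `M ⊗ N` through the second factor -/
def pCoactR (cRN : N →ₗ[k] N ⊗[k] H) : M ⊗[k] N →ₗ[k] (M ⊗[k] N) ⊗[k] H :=
  asr k M N H ∘ₗ TensorProduct.map LinearMap.id cRN

end Pointwise

section Identities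
variable (H : Type*) [Ring H] [Bialgebra k H]
variable (D : Type*) [Ring D] [Algebra k D]

/-- `c₂ ⊗ (h₁ ⊗ (d₁⁽⁰⁾ ⊗ d₁⁽¹⁾)) ↦ (c₂⁽⁻¹⁾h₁·d₁⁽⁰⁾) ⊗ (c₂⁽⁰⁾·d₁⁽¹⁾)` -/
def Fmap (aL : H ⊗[k] D →ₗ[k] D) (aR : D ⊗[k] H →ₗ[k] D) (cL : D →ₗ[k] H ⊗[k] D) :
    D ⊗[k] (H ⊗[k] (D ⊗[k] H)) →ₗ[k] D ⊗[k] D :=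
  TensorProduct.map aL LinearMap.id
    ∘ₗ asr k H D D
    ∘ₗ TensorProduct.map LinearMap.id
        (sw k D D ∘ₗ TensorProduct.map aR LinearMap.id ∘ₗ asr k D H D
          ∘ₗ TensorProduct.map LinearMap.id (sw k D H))
    ∘ₗ TensorProduct.map (μH k H) LinearMap.id
    ∘ₗ tt k H D H (D ⊗[k] H)
    ∘ₗ TensorProduct.map cL LinearMap.id

/-- `(h₁⊗h₂)⊗(c⊗d) ↦ [c(h₁·d)]₁ ⊗ ([c(h₁·d)]₂⁽⁻¹⁾h₂ ⊗ [c(h₁·d)]₂⁽⁰⁾)` -/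
def L3map (aL : H ⊗[k] D →ₗ[k] D) (cL : D →ₗ[k] H ⊗[k] D) (Δd : D →ₗ[k] D ⊗[k] D) :
    (H ⊗[k] H) ⊗[k] (D ⊗[k] D) →ₗ[k] D ⊗[k] (H ⊗[k] D) :=
  TensorProduct.map LinearMap.id (TensorProduct.map (μH k H) LinearMap.id)
    ∘ₗ TensorProduct.map LinearMap.id (asr k H H D)
    ∘ₗ asl k D H (H ⊗[k] D)
    ∘ₗ tt k D H H D
    ∘ₗ TensorProduct.map (sw k H D) LinearMap.id
    ∘ₗ asr k H D (H ⊗[k] D)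
    ∘ₗ TensorProduct.map LinearMap.id (TensorProduct.map LinearMap.id cL)
    ∘ₗ TensorProduct.map LinearMap.id Δd
    ∘ₗ TensorProduct.map LinearMap.id (μD k)
    ∘ₗ asl k H D D
    ∘ₗ TensorProduct.map LinearMap.id aL
    ∘ₗ tt k H H D D
    ∘ₗ TensorProduct.map (sw k H H) LinearMap.id

/-- `((h₁⊗h₂)⊗h₃)⊗((c₁⊗c₂)⊗(d₁⊗d₂)) ↦`
`c₁(c₂⁽⁻¹⁾h₁·d₁⁽⁰⁾) ⊗ (c₂⁽⁰⁾⁽⁻¹⁾h₂d₂⁽⁻¹⁾ ⊗ (c₂⁽⁰⁾⁽⁰⁾·d₁⁽¹⁾)(h₃·d₂⁽⁰⁾))` -/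
def R3map (aL : H ⊗[k] D →ₗ[k] D) (aR : D ⊗[k] H →ₗ[k] D)
    (cL : D →ₗ[k] H ⊗[k] D) (cR : D →ₗ[k] D ⊗[k] H) :
    ((H ⊗[k] H) ⊗[k] H) ⊗[k] ((D ⊗[k] D) ⊗[k] (D ⊗[k] D)) →ₗ[k]
      D ⊗[k] (H ⊗[k] D) :=
  TensorProduct.map (μD k) LinearMap.id
    ∘ₗ asr k D D (H ⊗[k] D)
    ∘ₗ TensorProduct.map LinearMap.id
        (asl k D H D
          ∘ₗ TensorProduct.map LinearMap.id (μD k)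
          ∘ₗ TensorProduct.map (TensorProduct.map aL (μH k H)) (TensorProduct.map aR aL)
          ∘ₗ TensorProduct.map (tt k H H D H) (tt k D H H D)
          ∘ₗ tt k (H ⊗[k] H) (D ⊗[k] H) (D ⊗[k] H) (H ⊗[k] D)
          ∘ₗ TensorProduct.map LinearMap.id (tt k D H H D))
    ∘ₗ asl k D ((H ⊗[k] H) ⊗[k] (D ⊗[k] H)) ((D ⊗[k] H) ⊗[k] (H ⊗[k] D))
    ∘ₗ TensorProduct.map
        (TensorProduct.map LinearMap.id
          (TensorProduct.map (TensorProduct.map (μH k H) (μH k H)) LinearMap.id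
            ∘ₗ TensorProduct.map (tt k H H H H) LinearMap.id
            ∘ₗ tt k (H ⊗[k] H) D (H ⊗[k] H) H))
        LinearMap.id
    ∘ₗ TensorProduct.map (asl k D ((H ⊗[k] H) ⊗[k] D) ((H ⊗[k] H) ⊗[k] H)) LinearMap.id
    ∘ₗ TensorProduct.map (sw k ((H ⊗[k] H) ⊗[k] H) (D ⊗[k] ((H ⊗[k] H) ⊗[k] D))) LinearMap.id
    ∘ₗ asr k ((H ⊗[k] H) ⊗[k] H) (D ⊗[k] ((H ⊗[k] H) ⊗[k] D))
        ((D ⊗[k] H) ⊗[k] (H ⊗[k] D))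
    ∘ₗ TensorProduct.map LinearMap.id
        (TensorProduct.map (TensorProduct.map LinearMap.id (asr k H H D)) LinearMap.id)
    ∘ₗ TensorProduct.map LinearMap.id
        (TensorProduct.map
          (TensorProduct.map LinearMap.id (TensorProduct.map LinearMap.id cL ∘ₗ cL))
          (TensorProduct.map cR cL))

end Identities

section Radford
variable (H : Type*) [Ring H] [Bialgebra k H]
variable (D : Type*) [Ring D] [Algebra k D]

/-- Radford's admissible-pair conditions for a left module algebra, left comodule
coalgebra `D` -/
def RadfordAdmissible (aL : H ⊗[k] D →ₗ[k] D) (cL : D →ₗ[k] H ⊗[k] D)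
    (Δd : D →ₗ[k] D ⊗[k] D) (εd : D →ₗ[k] k) : Prop :=
  IsLeftModule k H aL ∧ IsLeftModuleAlgebra k H aL ∧ IsLeftComodule k H cL ∧
  IsCoalg k Δd εd ∧ IsLComodCoalg k H cL Δd εd ∧ CondCounitAlg k εd ∧
  (∀ (h : H) (d : D), εd (aL (h ⊗ₜ d)) = εH k H h * εd d) ∧
  Δd 1 = 1 ⊗ₜ 1 ∧ cL 1 = 1 ⊗ₜ 1 ∧
  (∀ c d : D, cL (c * d)
      = TensorProduct.map (μH k H) (μD k) (tt k H D H D (cL c ⊗ₜ cL d))) ∧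
  (∀ (h : H) (d : D), Δd (aL (h ⊗ₜ d))
      = TensorProduct.map aL aL (tt k H H D D (δH k H h ⊗ₜ Δd d))) ∧
  (∀ c d : D, Δd (c * d)
      = TensorProduct.map (μD k) (μD k)
          (middle k (braidYDl k H D cL aL) (Δd c ⊗ₜ Δd d))) ∧
  CondYDl k H aL cL

/-- the element `d(h₁·d') ⊗ h₂h'` of the Radford biproduct -/
def radMulExpr (aL : H ⊗[k] D →ₗ[k] D) (d : D) (h : H) (d' : D) (h' : H) : D ⊗[k] H :=
  TensorProduct.map (μD k) (μH k H ∘ₗ sw k H H)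
    (tt k D H D H ((d ⊗ₜ h') ⊗ₜ Yel k H aL h d'))

/-- comultiplication map of the Radford biproduct:
`(d₁⊗d₂)⊗(h₁⊗h₂) ↦ (d₁ ⊗ d₂⁽⁻¹⁾h₁) ⊗ (d₂⁽⁰⁾ ⊗ h₂)` -/
def WRad (cL : D →ₗ[k] H ⊗[k] D) :
    (D ⊗[k] D) ⊗[k] (H ⊗[k] H) →ₗ[k] (D ⊗[k] H) ⊗[k] (D ⊗[k] H) :=
  TensorProduct.map (TensorProduct.map LinearMap.id (μH k H) ∘ₗ asl k D H H) LinearMap.id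
    ∘ₗ tt k (D ⊗[k] H) D H H
    ∘ₗ TensorProduct.map (asr k D H D) LinearMap.id
    ∘ₗ TensorProduct.map (TensorProduct.map LinearMap.id cL) LinearMap.id

/-- `(h₁·d) ⊗ h₂` reversed version: `(h₂·d) ⊗ h₁` -/
def Y2el (aL : H ⊗[k] D →ₗ[k] D) (h : H) (d : D) : D ⊗[k] H :=
  TensorProduct.comm k H D
    (TensorProduct.map LinearMap.id aL (TensorProduct.assoc k H H D (δH k H h ⊗ₜ d)))

/-- `(d·h₁) ⊗ h₂` -/
def X1el (aR : D ⊗[k] H →ₗ[k] D) (d : D) (h : H) : D ⊗[k] H :=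
  TensorProduct.map aR LinearMap.id ((TensorProduct.assoc k D H H).symm (d ⊗ₜ δH k H h))

end Radford
end LRPaper

namespace LRPaper
set_option maxHeartbeats 1000000
set_option synthInstance.maxHeartbeats 400000
section AuxStruct
variable {k : Type*} [CommRing k]

@[simp] lemma tt_tmul {A B C E : Type*} [AddCommGroup A] [Module k A] [AddCommGroup B]
    [Module k B] [AddCommGroup C] [Module k C] [AddCommGroup E] [Module k E]
    (a : A) (b : B) (c : C) (e : E) :
    tt k A B C E ((a ⊗ₜ b) ⊗ₜ (c ⊗ₜ e)) = (a ⊗ₜ c) ⊗ₜ (b ⊗ₜ e) := rfl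

@[simp] lemma asl_tmul {A B C : Type*} [AddCommGroup A] [Module k A] [AddCommGroup B]
    [Module k B] [AddCommGroup C] [Module k C] (a : A) (b : B) (c : C) :
    asl k A B C ((a ⊗ₜ b) ⊗ₜ c) = a ⊗ₜ (b ⊗ₜ c) := rfl

@[simp] lemma asr_tmul {A B C : Type*} [AddCommGroup A] [Module k A] [AddCommGroup B]
    [Module k B] [AddCommGroup C] [Module k C] (a : A) (b : B) (c : C) :
    asr k A B C (a ⊗ₜ (b ⊗ₜ c)) = (a ⊗ₜ b) ⊗ₜ c := rfl

@[simp] lemma sw_tmul {A B : Type*} [AddCommGroup A] [Module k A] [AddCommGroup B]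
    [Module k B] (a : A) (b : B) : sw k A B (a ⊗ₜ b) = b ⊗ₜ a := rfl

@[simp] lemma μH_tmul {H : Type*} [Ring H] [Bialgebra k H] (a b : H) :
    μH k H (a ⊗ₜ b) = a * b := rfl

@[simp] lemma μD_tmul {D : Type*} [Ring D] [Algebra k D] (a b : D) :
    μD k (a ⊗ₜ b) = a * b := rfl

lemma middle_tmul {A B C E B' C' : Type*} [AddCommGroup A] [Module k A] [AddCommGroup B]
    [Module k B] [AddCommGroup C] [Module k C] [AddCommGroup E] [Module k E]
    [AddCommGroup B'] [Module k B'] [AddCommGroup C'] [Module k C']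
    (f : B ⊗[k] C →ₗ[k] B' ⊗[k] C') (a : A) (b : B) (c : C) (e : E) :
    middle k f ((a ⊗ₜ b) ⊗ₜ (c ⊗ₜ e))
      = asl k (A ⊗[k] B') C' E ((asr k A B' C' (a ⊗ₜ f (b ⊗ₜ c))) ⊗ₜ e) := by
  simp [middle]

end AuxStruct

section AuxEval
variable {k : Type*} [CommRing k] {H : Type*} [Ring H] [Bialgebra k H]
  {D : Type*} [Ring D] [Algebra k D]
variable (aL : H ⊗[k] D →ₗ[k] D) (aR : D ⊗[k] H →ₗ[k] D)
  (cL : D →ₗ[k] H ⊗[k] D) (cR : D →ₗ[k] D ⊗[k] H) (Δd : D →ₗ[k] D ⊗[k] D)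

lemma braid_tmul (m n : D) :
    braid k H cL aR aL cR (m ⊗ₜ n)
      = TensorProduct.map aL aR (tt k H D D H (cL m ⊗ₜ cR n)) := rfl

lemma ydlL_tmul (y z : H) (m : D) :
    ydlL k H aL cL ((y ⊗ₜ z) ⊗ₜ m)
      = TensorProduct.map (LinearMap.mulRight k z) LinearMap.id (cL (aL (y ⊗ₜ m))) := by
  unfold ydlL
  simp only [LinearMap.coe_comp, Function.comp_apply, TensorProduct.map_tmul,
    LinearMap.id_coe, id_eq, sw_tmul, asl_tmul]
  induction cL (aL (y ⊗ₜ m)) using TensorProduct.induction_on with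
  | zero => simp
  | tmul p q => simp
  | add p q hp hq => simp_all [TensorProduct.tmul_add]

lemma ydlR_tmul (y z : H) (m : D) :
    ydlR k H aL cL ((y ⊗ₜ z) ⊗ₜ m)
      = TensorProduct.map (LinearMap.mulLeft k y) (aL ∘ₗ TensorProduct.mk k H D z) (cL m) := by
  unfold ydlR
  simp only [LinearMap.coe_comp, Function.comp_apply, TensorProduct.map_tmul,
    LinearMap.id_coe, id_eq]
  induction cL m using TensorProduct.induction_on with
  | zero => simp
  | tmul p q => simp
  | add p q hp hq => simp_all [TensorProduct.tmul_add]

lemma L3map_apply (a b : H) (c d : D) :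
    L3map k H D aL cL Δd ((a ⊗ₜ b) ⊗ₜ (c ⊗ₜ d))
      = TensorProduct.map LinearMap.id
          ((TensorProduct.map (LinearMap.mulRight k b) LinearMap.id) ∘ₗ cL)
          (Δd (c * aL (a ⊗ₜ d))) := by
  unfold L3map
  simp only [LinearMap.coe_comp, Function.comp_apply, TensorProduct.map_tmul,
    LinearMap.id_coe, id_eq, sw_tmul, tt_tmul, asl_tmul, μD_tmul]
  induction Δd (c * aL (a ⊗ₜ d)) using TensorProduct.induction_on with
  | zero => simp
  | tmul p q =>
    simp only [TensorProduct.map_tmul, LinearMap.id_coe, id_eq, TensorProduct.tmul_zero,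
      LinearMap.coe_comp, Function.comp_apply]
    induction cL q using TensorProduct.induction_on with
    | zero => simp
    | tmul u v => simp
    | add u v hu hv => simp_all [TensorProduct.tmul_add, TensorProduct.add_tmul]
  | add p q hp hq => simp_all [TensorProduct.tmul_add, map_add]

/-- generic building block for the expanded sums -/
def FcGen (ydmap : (H ⊗[k] H) ⊗[k] D →ₗ[k] H ⊗[k] D)
    (r s : D × D) (t : D × H) (u w : H × D) :
    (H ⊗[k] H) ⊗[k] H →ₗ[k] D ⊗[k] (H ⊗[k] D) :=
  TensorProduct.map
      (LinearMap.mulLeft k r.1 ∘ₗ aL ∘ₗ (TensorProduct.mk k H D).flip t.1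
        ∘ₗ LinearMap.mulLeft k u.1)
      (TensorProduct.map (LinearMap.mulLeft k w.1)
          (LinearMap.mulLeft k (aR (w.2 ⊗ₜ t.2)))
        ∘ₗ ydmap ∘ₗ (TensorProduct.mk k (H ⊗[k] H) D).flip s.2)
    ∘ₗ asl k H H H

lemma FcGen_tmul (ydmap : (H ⊗[k] H) ⊗[k] D →ₗ[k] H ⊗[k] D)
    (r s : D × D) (t : D × H) (u w : H × D) (x y z : H) :
    FcGen aL aR ydmap r s t u w ((x ⊗ₜ y) ⊗ₜ z)
      = (r.1 * aL ((u.1 * x) ⊗ₜ t.1)) ⊗ₜ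
          (TensorProduct.map (LinearMap.mulLeft k w.1)
            (LinearMap.mulLeft k (aR (w.2 ⊗ₜ t.2))) (ydmap ((y ⊗ₜ z) ⊗ₜ s.2))) := by
  simp [FcGen, TensorProduct.mk_apply, LinearMap.flip_apply]

end AuxEval

/-- identity (2.2) of the paper. -/
theorem lr_admissible_identity_two
    {k : Type*} [CommRing k] {H : Type*} [Ring H] [Bialgebra k H]
    {D : Type*} [Ring D] [Algebra k D]
    (aL : H ⊗[k] D →ₗ[k] D) (aR : D ⊗[k] H →ₗ[k] D)
    (cL : D →ₗ[k] H ⊗[k] D) (cR : D →ₗ[k] D ⊗[k] H)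
    (Δd : D →ₗ[k] D ⊗[k] D) (εd : D →ₗ[k] k)
    (hadm : LRAdmissible k H aL aR cL cR Δd εd) :
    ∀ (h : H) (c d : D),
      L3map k H D aL cL Δd (δH k H h ⊗ₜ (c ⊗ₜ d))
        = R3map k H D aL aR cL cR
            ((TensorProduct.map (δH k H) LinearMap.id (δH k H h)) ⊗ₜ
              (Δd c ⊗ₜ Δd d)) := by
  intro h c d
  obtain ⟨hBim, hLMA, hRMA, hBicom, hCoalg, hLCC, hRCC, hεalg, hεact, hunits,
    hcoactmul, hcomulact, hbraidmul, hydl, hlonglr, hydr, hlongrl, h114⟩ := hadm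
  obtain ⟨Rδ, hRδ⟩ : ∃ R : H → Finset (H × H),
      ∀ x : H, δH k H x = ∑ p ∈ R x, p.1 ⊗ₜ[k] p.2 :=
    ⟨fun x => (TensorProduct.exists_finset (δH k H x)).choose,
      fun x => (TensorProduct.exists_finset (δH k H x)).choose_spec⟩
  obtain ⟨RΔ, hRΔ⟩ : ∃ R : D → Finset (D × D),
      ∀ x : D, Δd x = ∑ p ∈ R x, p.1 ⊗ₜ[k] p.2 :=
    ⟨fun x => (TensorProduct.exists_finset (Δd x)).choose,
      fun x => (TensorProduct.exists_finset (Δd x)).choose_spec⟩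
  obtain ⟨RL, hRL⟩ : ∃ R : D → Finset (H × D),
      ∀ x : D, cL x = ∑ p ∈ R x, p.1 ⊗ₜ[k] p.2 :=
    ⟨fun x => (TensorProduct.exists_finset (cL x)).choose,
      fun x => (TensorProduct.exists_finset (cL x)).choose_spec⟩
  obtain ⟨RR, hRR⟩ : ∃ R : D → Finset (D × H),
      ∀ x : D, cR x = ∑ p ∈ R x, p.1 ⊗ₜ[k] p.2 :=
    ⟨fun x => (TensorProduct.exists_finset (cR x)).choose,
      fun x => (TensorProduct.exists_finset (cR x)).choose_spec⟩
  set AbigL : (H ⊗[k] H) ⊗[k] H →ₗ[k] D ⊗[k] (H ⊗[k] D) :=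
    ∑ r ∈ RΔ c, ∑ s ∈ RΔ d, ∑ u ∈ RL r.2, ∑ t ∈ RR s.1, ∑ w ∈ RL u.2,
      FcGen aL aR (ydlL k H aL cL) r s t u w with hAbigL
  set AbigR : (H ⊗[k] H) ⊗[k] H →ₗ[k] D ⊗[k] (H ⊗[k] D) :=
    ∑ r ∈ RΔ c, ∑ s ∈ RΔ d, ∑ u ∈ RL r.2, ∑ t ∈ RR s.1, ∑ w ∈ RL u.2,
      FcGen aL aR (ydlR k H aL cL) r s t u w with hAbigR
  have hco : TensorProduct.map (δH k H) LinearMap.id (δH k H h)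
      = (TensorProduct.assoc k H H H).symm
          (TensorProduct.map LinearMap.id (δH k H) (δH k H h)) :=
    (Coalgebra.coassoc_symm_apply h).symm
  have keyL : ∀ a b : H,
      L3map k H D aL cL Δd ((a ⊗ₜ b) ⊗ₜ (c ⊗ₜ d))
        = ∑ p ∈ Rδ a, AbigL ((p.1 ⊗ₜ p.2) ⊗ₜ b) := by
    intro a b
    have hLmod : ∀ (h' h'' : H) (m : D),
        aL ((h' * h'') ⊗ₜ m) = aL (h' ⊗ₜ aL (h'' ⊗ₜ m)) := hBim.1.2
    have hLLR : ∀ (h' : H) (m : D), cR (aL (h' ⊗ₜ m))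
        = TensorProduct.map aL LinearMap.id
            ((TensorProduct.assoc k H D H).symm (h' ⊗ₜ cR m)) := hlonglr
    have hLRL : ∀ (m : D) (h' : H), cL (aR (m ⊗ₜ h'))
        = TensorProduct.map LinearMap.id aR
            (TensorProduct.assoc k H D H (cL m ⊗ₜ h')) := hlongrl
    have hcLmul : ∀ x y : D, cL (x * y)
        = TensorProduct.map (μH k H) (μD k) (tt k H D H D (cL x ⊗ₜ cL y)) := hcoactmul.1
    rw [L3map_apply, hbraidmul c (aL (a ⊗ₜ d)), hcomulact.1 a d]
    simp only [hAbigL, LinearMap.sum_apply, FcGen_tmul, ydlL_tmul]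
    simp only [hRδ, hRΔ, map_sum, TensorProduct.sum_tmul, TensorProduct.tmul_sum,
      TensorProduct.map_tmul, LinearMap.id_coe, id_eq, tt_tmul, asl_tmul, asr_tmul, sw_tmul,
      μH_tmul, μD_tmul, LinearMap.coe_comp, Function.comp_apply, middle_tmul, braid_tmul]
    conv_lhs => enter [2, s, 2, p, 2, r]; rw [hRL]
    simp only [hLLR, hLRL, hcLmul, ← hLmod, hRR, map_sum, TensorProduct.sum_tmul,
      TensorProduct.tmul_sum, TensorProduct.map_tmul, LinearMap.id_coe, id_eq, tt_tmul,
      asl_tmul, asr_tmul, sw_tmul, μH_tmul, μD_tmul, LinearMap.coe_comp, Function.comp_apply,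
      TensorProduct.mk_apply, LinearMap.mulLeft_apply, LinearMap.mulRight_apply,
      Finset.mul_sum, Finset.sum_mul, TensorProduct.assoc_tmul, TensorProduct.assoc_symm_tmul,
      LinearEquiv.coe_coe]
    simp only [hRL, hRR, map_sum, TensorProduct.sum_tmul, TensorProduct.tmul_sum,
      TensorProduct.map_tmul, LinearMap.id_coe, id_eq, tt_tmul, asl_tmul, asr_tmul, sw_tmul,
      μH_tmul, μD_tmul, LinearMap.coe_comp, Function.comp_apply, TensorProduct.mk_apply,
      LinearMap.mulLeft_apply, LinearMap.mulRight_apply, Finset.mul_sum, Finset.sum_mul,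
      TensorProduct.assoc_tmul, TensorProduct.assoc_symm_tmul, LinearEquiv.coe_coe]
    conv_lhs =>
      rw [Finset.sum_comm]
      enter [2, p]
      rw [Finset.sum_comm]
      enter [2, r, 2, s]
      rw [Finset.sum_comm]
      enter [2, u, 2, t]
      rw [Finset.sum_comm]
    simp only [mul_assoc]
  have keyR : ∀ x y z : H,
      R3map k H D aL aR cL cR (((x ⊗ₜ y) ⊗ₜ z) ⊗ₜ (Δd c ⊗ₜ Δd d))
        = AbigR ((x ⊗ₜ y) ⊗ₜ z) := by
    intro x y z
    unfold R3map
    rw [hRΔ c, hRΔ d]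
    simp only [LinearMap.coe_comp, Function.comp_apply, TensorProduct.map_tmul,
      LinearMap.id_coe, id_eq, TensorProduct.sum_tmul, TensorProduct.tmul_sum, map_sum,
      LinearMap.sum_apply, tt_tmul, asl_tmul, asr_tmul, sw_tmul, μH_tmul, μD_tmul]
    simp only [hAbigR, LinearMap.sum_apply, FcGen_tmul, ydlR_tmul]
    simp only [hRL, hRR, map_sum, TensorProduct.sum_tmul, TensorProduct.tmul_sum,
      TensorProduct.map_tmul, LinearMap.id_coe, id_eq, tt_tmul, asl_tmul, asr_tmul, sw_tmul,
      μH_tmul, μD_tmul, LinearMap.coe_comp, Function.comp_apply, TensorProduct.mk_apply,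
      LinearMap.mulLeft_apply, LinearMap.mulRight_apply, Finset.mul_sum, Finset.sum_mul]
    conv_lhs =>
      rw [Finset.sum_comm]
      enter [2, r, 2, s]
      rw [Finset.sum_comm]
      enter [2, t]
      rw [Finset.sum_comm]
      enter [2, u]
      rw [Finset.sum_comm]
    conv_rhs =>
      enter [2, r, 2, s]
      rw [Finset.sum_comm]
    simp only [mul_assoc]
  calc L3map k H D aL cL Δd (δH k H h ⊗ₜ (c ⊗ₜ d))
      = ∑ ab ∈ Rδ h, L3map k H D aL cL Δd ((ab.1 ⊗ₜ ab.2) ⊗ₜ (c ⊗ₜ d)) := by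
        rw [hRδ h]
        simp [TensorProduct.sum_tmul, map_sum]
    _ = ∑ ab ∈ Rδ h, ∑ p ∈ Rδ ab.1, AbigL ((p.1 ⊗ₜ p.2) ⊗ₜ ab.2) :=
        Finset.sum_congr rfl fun ab _ => keyL ab.1 ab.2
    _ = AbigL (TensorProduct.map (δH k H) LinearMap.id (δH k H h)) := by
        rw [hRδ h]
        simp [map_sum, hRδ, TensorProduct.sum_tmul]
    _ = AbigL ((TensorProduct.assoc k H H H).symm
          (TensorProduct.map LinearMap.id (δH k H) (δH k H h))) := by rw [← hco]
    _ = ∑ ab ∈ Rδ h, AbigL ((TensorProduct.assoc k H H H).symm (ab.1 ⊗ₜ δH k H ab.2)) := by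
        conv_lhs => rw [hRδ h]
        simp [map_sum]
    _ = ∑ ab ∈ Rδ h, AbigR ((TensorProduct.assoc k H H H).symm (ab.1 ⊗ₜ δH k H ab.2)) := by
        refine Finset.sum_congr rfl fun ab _ => ?_
        simp only [hAbigL, hAbigR, LinearMap.sum_apply]
        refine Finset.sum_congr rfl fun r _ => Finset.sum_congr rfl fun s _ =>
          Finset.sum_congr rfl fun u _ => Finset.sum_congr rfl fun t _ =>
          Finset.sum_congr rfl fun w _ => ?_
        simp only [FcGen, LinearMap.coe_comp, Function.comp_apply, asl,
          LinearEquiv.coe_coe, LinearEquiv.apply_symm_apply, TensorProduct.map_tmul,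
          LinearMap.flip_apply, TensorProduct.mk_apply]
        rw [hydl ab.2 s.2]
    _ = AbigR ((TensorProduct.assoc k H H H).symm
          (TensorProduct.map LinearMap.id (δH k H) (δH k H h))) := by
        conv_rhs => rw [hRδ h]
        simp [map_sum]
    _ = AbigR (TensorProduct.map (δH k H) LinearMap.id (δH k H h)) := by rw [hco]
    _ = ∑ ab ∈ Rδ h, ∑ p ∈ Rδ ab.1, AbigR ((p.1 ⊗ₜ p.2) ⊗ₜ ab.2) := by
        rw [hRδ h]
        simp [map_sum, hRδ, TensorProduct.sum_tmul]
    _ = ∑ ab ∈ Rδ h, ∑ p ∈ Rδ ab.1,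
          R3map k H D aL aR cL cR (((p.1 ⊗ₜ p.2) ⊗ₜ ab.2) ⊗ₜ (Δd c ⊗ₜ Δd d)) :=
        Finset.sum_congr rfl fun ab _ => Finset.sum_congr rfl fun p _ =>
          (keyR p.1 p.2 ab.2).symm
    _ = R3map k H D aL aR cL cR
          ((TensorProduct.map (δH k H) LinearMap.id (δH k H h)) ⊗ₜ (Δd c ⊗ₜ Δd d)) := by
        conv_rhs => rw [hRδ h]
        simp [map_sum, hRδ, TensorProduct.sum_tmul]
end LRPaper
end
end

section
/- Let H be a bialgebra and D an H-bimodule algebra. If D is moreover a bialgebra such that ε_D(h·d) = ε_D(d·h) = ε_D(d)ε_H(h), Δ_D(h·d) = h₁·d₁ ⊗ h₂·d₂, and Δ_D(d·h) = d₁·h₁ ⊗ d₂·h₂ (D is an H-bimodule bialgebra), and D is equipped with the trivial left and right H-coactions (λ(d) = 1_H ⊗ d, ρ(d) = d ⊗ 1_H), then (H, D) is an L-R-admissible pair if and only if for all h ∈ H, d ∈ D: h₁·d ⊗ h₂ = h₂·d ⊗ h₁ and d·h₁ ⊗ h₂ = d·h₂ ⊗ h₁. -/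
open TensorProduct
noncomputable section
namespace LRPaper

section Aux
variable {k : Type*} [CommRing k] {H : Type*} [Ring H] [Bialgebra k H]
  {D : Type*} [Ring D] [Algebra k D]

@[simp] lemma trivCoactL_apply (d : D) : trivCoactL k H d = (1 : H) ⊗ₜ[k] d := by
  simp [trivCoactL]

@[simp] lemma trivCoactR_apply (d : D) : trivCoactR k H d = d ⊗ₜ[k] (1 : H) := by
  simp [trivCoactR]

lemma ydlL_triv (aL : H ⊗[k] D →ₗ[k] D) :
    ydlL k H aL (trivCoactL k H)
      = TensorProduct.map LinearMap.id aL ∘ₗ asl k H H D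
          ∘ₗ TensorProduct.map (sw k H H) LinearMap.id := by
  apply TensorProduct.ext_threefold
  intro a b m
  simp [ydlL, asl, asr, sw, μH]

lemma ydlR_triv (aL : H ⊗[k] D →ₗ[k] D) :
    ydlR k H aL (trivCoactL k H)
      = TensorProduct.map LinearMap.id aL ∘ₗ asl k H H D := by
  apply TensorProduct.ext_threefold
  intro a b m
  simp [ydlR, asl, tt, μH]

lemma ext3r {A B C E : Type*} [AddCommGroup A] [Module k A] [AddCommGroup B] [Module k B]
    [AddCommGroup C] [Module k C] [AddCommGroup E] [Module k E]
    {f g : A ⊗[k] (B ⊗[k] C) →ₗ[k] E}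
    (h : ∀ (a : A) (b : B) (c : C), f (a ⊗ₜ (b ⊗ₜ c)) = g (a ⊗ₜ (b ⊗ₜ c))) : f = g := by
  rw [← LinearMap.cancel_right (g := (TensorProduct.assoc k A B C).toLinearMap)
    (LinearEquiv.surjective _)]
  exact TensorProduct.ext_threefold fun a b c => by simpa using h a b c

lemma ydrL_triv (aR : D ⊗[k] H →ₗ[k] D) :
    ydrL k H aR (trivCoactR k H)
      = TensorProduct.map aR LinearMap.id ∘ₗ asr k D H H
          ∘ₗ TensorProduct.map LinearMap.id (sw k H H) := by
  apply ext3r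
  intro m a b
  simp [ydrL, asl, asr, sw, μH]

lemma ydrR_triv (aR : D ⊗[k] H →ₗ[k] D) :
    ydrR k H aR (trivCoactR k H)
      = TensorProduct.map aR LinearMap.id ∘ₗ asr k D H H := by
  apply ext3r
  intro m a b
  simp [ydrR, asr, tt, μH]

lemma lcomod_comp :
    (TensorProduct.map (μH k H) LinearMap.id ∘ₗ tt k H D H D
      ∘ₗ TensorProduct.map (trivCoactL k H) (trivCoactL k H))
      = (trivCoactL k H : D ⊗[k] D →ₗ[k] H ⊗[k] (D ⊗[k] D)) := by
  apply TensorProduct.ext'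
  intro x y
  simp [tt, μH]

lemma rcomod_comp :
    (TensorProduct.map LinearMap.id (μH k H) ∘ₗ tt k D H D H
      ∘ₗ TensorProduct.map (trivCoactR k H) (trivCoactR k H))
      = (trivCoactR k H : D ⊗[k] D →ₗ[k] (D ⊗[k] D) ⊗[k] H) := by
  apply TensorProduct.ext'
  intro x y
  simp [tt, μH]

lemma braid_triv (aL : H ⊗[k] D →ₗ[k] D) (aR : D ⊗[k] H →ₗ[k] D)
    (haL : ∀ d : D, aL (1 ⊗ₜ d) = d) (haR : ∀ d : D, aR (d ⊗ₜ 1) = d) :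
    braid k H (trivCoactL k H) aR aL (trivCoactR k H) = sw k D D := by
  apply TensorProduct.ext'
  intro m n
  simp [braid, tt, sw, haL, haR]

lemma middle_sw : middle k (sw k D D) = tt k D D D D := by
  apply TensorProduct.ext_fourfold'
  intro a b c e
  simp [middle, asl, asr, sw, tt]

end Aux

/-- for an `H`-bimodule bialgebra `D` with trivial coactions,
L-R-admissibility is equivalent to the two commutation conditions
`h₁·d ⊗ h₂ = h₂·d ⊗ h₁` and `d·h₁ ⊗ h₂ = d·h₂ ⊗ h₁`. -/
theorem lr_admissible_trivial_coactions_iff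
    {k : Type*} [CommRing k] {H : Type*} [Ring H] [Bialgebra k H]
    {D : Type*} [Ring D] [Algebra k D]
    (aL : H ⊗[k] D →ₗ[k] D) (aR : D ⊗[k] H →ₗ[k] D)
    (Δd : D →ₗ[k] D ⊗[k] D) (εd : D →ₗ[k] k)
    (hbim : IsBimodule k H aL aR)
    (hla : IsLeftModuleAlgebra k H aL) (hra : IsRightModuleAlgebra k H aR)
    (hco : IsCoalg k Δd εd) (hεalg : CondCounitAlg k εd)
    (hεact : CondCounitActs k H aL aR εd)
    (hΔ1 : Δd 1 = 1 ⊗ₜ 1)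
    (hΔmul : ∀ c d : D,
      Δd (c * d) = TensorProduct.map (μD k) (μD k) (tt k D D D D (Δd c ⊗ₜ Δd d)))
    (hΔact : CondComulAct k H aL aR Δd) :
    LRAdmissible k H aL aR (trivCoactL k H) (trivCoactR k H) Δd εd ↔
      ((∀ (h : H) (d : D), Yel k H aL h d = Y2el k H D aL h d) ∧
       (∀ (d : D) (h : H), X1el k H D aR d h = Xel k H aR d h)) := by
  constructor
  · rintro ⟨-, -, -, -, -, -, -, -, -, -, -, -, -, hYDl, -, hYDr, -, -⟩
    constructor
    · intro h d
      have hh := hYDl h d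
      rw [ydlL_triv, ydlR_triv] at hh
      exact congrArg (TensorProduct.comm k H D) hh
    · intro d h
      have hh := hYDr h d
      rw [ydrL_triv, ydrR_triv] at hh
      exact hh.symm
  · rintro ⟨hY, hX⟩
    refine ⟨hbim, hla, hra, ?_, hco, ?_, ?_, hεalg, hεact, ?_, ?_, hΔact, ?_, ?_, ?_, ?_, ?_, ?_⟩
    · -- IsBicomodule
      refine ⟨⟨fun m => ?_, fun m => ?_⟩, ⟨fun m => ?_, fun m => ?_⟩, fun m => ?_⟩ <;>
        simp [εH, δH, Algebra.TensorProduct.one_def]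
    · -- IsLComodCoalg
      refine ⟨fun m => ?_, fun m => ?_⟩
      · have h1 := LinearMap.congr_fun (lcomod_comp (k := k) (H := H) (D := D)) (Δd m)
        simp only [LinearMap.comp_apply] at h1
        rw [h1]
        simp
      · simp
    · -- IsRComodCoalg
      refine ⟨fun m => ?_, fun m => ?_⟩
      · have h1 := LinearMap.congr_fun (rcomod_comp (k := k) (H := H) (D := D)) (Δd m)
        simp only [LinearMap.comp_apply] at h1
        rw [h1]
        simp
      · simp
    · -- CondUnits
      exact ⟨by simp, by simp, hΔ1⟩
    · -- CondCoactMul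
      constructor <;> intro c d <;> simp [tt, μH, μD, LinearMap.mul'_apply]
    · -- CondBraidMul
      intro c d
      rw [hΔmul, braid_triv aL aR hbim.1.1 hbim.2.1.1, middle_sw]
    · -- CondYDl
      intro h m
      rw [ydlL_triv, ydlR_triv]
      apply (TensorProduct.comm k H D).injective
      exact hY h m
    · -- CondLongLR
      intro h m
      simp
    · -- CondYDr
      intro h m
      rw [ydrL_triv, ydrR_triv]
      exact (hX m h).symm
    · -- CondLongRL
      intro m h
      simp
    · -- Cond114
      intro c d
      simp [tt, hbim.1.1, hbim.2.1.1]

end LRPaper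
end
end
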